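/- arXiv:2006.10903 — 2 statements merged into one kernel-verified Lean document; each statement's English description precedes it below -/
import Mathlib

section
/- Under the partial PL and smoothness setting above with κ = L_i/μ, the natural importance of block Δ_i at iteration τ (relative to initialization θ_0) satisfies I^N_{Δ_i}(θ_τ, θ_0)/L(θ_0) ≤ 8κ² + 4κ(1−ημ)^{τ/2}. -/
/-- Gradient of `f : ℝ^p → ℝ` as the vector of partial derivatives. -/
noncomputable def grad {p : ℕ} (f : (Fin p → ℝ) → ℝ) (θ : Fin p → ℝ) : Fin p → ℝ :=
  fun j => fderiv ℝ f θ (Pi.single j 1)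

/-!
Gradient descent with step `η ≤ 1/L` under the global PL inequality contracts `f` by `1 - ημ` per
step, and partial smoothness bounds the squared block gradient by `2 Lᵢ f`. So the block gradient
decays like `√(2 Lᵢ f(θ₀)) (1 - ημ)^{t/2}`, and summing this geometric series (using
`1 - √(1 - ημ) ≥ ημ/2`) bounds the block displacement `‖θ_τ - θ₀‖_Δ` by `2 √(2 Lᵢ f(θ₀)) / μ`.
The descent lemma on the block, for the move from `θ_τ` back to `θ₀` on `Δ`, bounds the importance
by `‖∇_Δ f(θ_τ)‖ ‖θ_τ - θ₀‖_Δ + Lᵢ/2 ‖θ_τ - θ₀‖_Δ²`.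
-/

open Finset RealInnerProductSpace

section BlockRestrict

variable {ι : Type*} (s : Finset ι)

/-- The coordinates of a vector on the block `s`, with the Euclidean structure of `ℝ^s`. -/
def blockRestrict : (ι → ℝ) →ₗ[ℝ] EuclideanSpace ℝ s where
  toFun v := WithLp.toLp 2 fun j => v j
  map_add' _ _ := rfl
  map_smul' _ _ := rfl

@[simp]
theorem blockRestrict_apply (v : ι → ℝ) (j : s) : blockRestrict s v j = v j := rfl

theorem norm_blockRestrict_sq (v : ι → ℝ) : ‖blockRestrict s v‖ ^ 2 = ∑ j ∈ s, v j ^ 2 := by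
  simp [EuclideanSpace.norm_sq_eq, sum_attach s (fun j => v j ^ 2)]

theorem inner_blockRestrict (u v : ι → ℝ) :
    ⟪blockRestrict s u, blockRestrict s v⟫ = ∑ j ∈ s, u j * v j := by
  simp [PiLp.inner_apply, mul_comm, sum_attach s (fun j => u j * v j)]

variable {s}

theorem blockRestrict_congr {u v : ι → ℝ} (h : ∀ j ∈ s, u j = v j) :
    blockRestrict s u = blockRestrict s v := by
  ext j
  exact h j j.2

theorem sum_mul_eq_inner_blockRestrict [Fintype ι] (u : ι → ℝ) {v : ι → ℝ}
    (hv : ∀ j ∉ s, v j = 0) : ∑ j, u j * v j = ⟪blockRestrict s u, blockRestrict s v⟫ := by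
  rw [inner_blockRestrict, ← sum_subset (subset_univ s)]
  intro j _ hj
  rw [hv j hj, mul_zero]

end BlockRestrict

section BlockSmooth

variable {p : ℕ} {f : (Fin p → ℝ) → ℝ}

theorem fderiv_apply_eq_sum_grad (f : (Fin p → ℝ) → ℝ) (x v : Fin p → ℝ) :
    fderiv ℝ f x v = ∑ j, grad f x j * v j := by
  conv_lhs => rw [← univ_sum_single v, map_sum]
  refine sum_congr rfl fun j _ => ?_
  rw [show Pi.single j (v j) = v j • Pi.single j (1 : ℝ) by rw [← Pi.single_smul', smul_eq_mul,
    mul_one], map_smul, smul_eq_mul, mul_comm]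
  rfl

theorem hasDerivAt_comp_add_smul (hf : Differentiable ℝ f) (x v : Fin p → ℝ) (t : ℝ) :
    HasDerivAt (fun t : ℝ => f (x + t • v)) (∑ j, grad f (x + t • v) j * v j) t := by
  have hline : HasDerivAt (fun t : ℝ => x + t • v) v t := by
    simpa using ((hasDerivAt_id t).smul_const v).const_add x
  rw [← fderiv_apply_eq_sum_grad]
  exact (hf _).hasFDerivAt.comp_hasDerivAt t hline

/-- Partial smoothness of `f` over the block `s`, with constant `L`. -/
def BlockSmooth (f : (Fin p → ℝ) → ℝ) (s : Finset (Fin p)) (L : ℝ) : Prop :=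
  ∀ x y : Fin p → ℝ, (∀ j ∉ s, x j = y j) →
    ∑ j ∈ s, (grad f x j - grad f y j) ^ 2 ≤ L ^ 2 * ∑ j ∈ s, (x j - y j) ^ 2

variable {s : Finset (Fin p)} {L : ℝ}

theorem BlockSmooth.norm_sub_le (hs : BlockSmooth f s L) (hL : 0 ≤ L) {x y : Fin p → ℝ}
    (hxy : ∀ j ∉ s, x j = y j) :
    ‖blockRestrict s (grad f x) - blockRestrict s (grad f y)‖ ≤ L * ‖blockRestrict s (x - y)‖ := by
  rw [← sq_le_sq₀ (norm_nonneg _) (by positivity), mul_pow, ← map_sub, norm_blockRestrict_sq,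
    norm_blockRestrict_sq]
  exact hs x y hxy

theorem BlockSmooth.descent (hf : Differentiable ℝ f) (hs : BlockSmooth f s L) (hL : 0 ≤ L)
    {x y : Fin p → ℝ} (hxy : ∀ j ∉ s, x j = y j) :
    f y ≤ f x + ⟪blockRestrict s (grad f x), blockRestrict s (y - x)⟫ +
      L / 2 * ‖blockRestrict s (y - x)‖ ^ 2 := by
  set R := blockRestrict s
  set v := y - x
  have hv : ∀ j ∉ s, v j = 0 := fun j hj => by simp [v, hxy j hj]
  have hderiv (t : ℝ) :
      HasDerivAt (fun t : ℝ => f (x + t • v)) ⟪R (grad f (x + t • v)), R v⟫ t := by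
    rw [← sum_mul_eq_inner_blockRestrict _ hv]
    exact hasDerivAt_comp_add_smul hf x v t
  have hslope (t : ℝ) (ht : 0 ≤ t) :
      ⟪R (grad f (x + t • v)), R v⟫ ≤ ⟪R (grad f x), R v⟫ + L * ‖R v‖ ^ 2 * t := by
    have hmove : ∀ j ∉ s, (x + t • v) j = x j := fun j hj => by simp [hv j hj]
    calc ⟪R (grad f (x + t • v)), R v⟫
        = ⟪R (grad f x), R v⟫ + ⟪R (grad f (x + t • v)) - R (grad f x), R v⟫ := by
          rw [inner_sub_left]; ring
      _ ≤ ⟪R (grad f x), R v⟫ + L * ‖R (x + t • v - x)‖ * ‖R v‖ := by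
          gcongr
          exact (real_inner_le_norm _ _).trans
            (mul_le_mul_of_nonneg_right (hs.norm_sub_le hL hmove) (norm_nonneg _))
      _ = ⟪R (grad f x), R v⟫ + L * ‖R v‖ ^ 2 * t := by
          rw [add_sub_cancel_left, map_smul, norm_smul, Real.norm_of_nonneg ht]; ring
  have hbound := image_le_of_deriv_right_le_deriv_boundary (a := 0) (b := 1)
    (B := fun t => f x + ⟪R (grad f x), R v⟫ * t + L / 2 * ‖R v‖ ^ 2 * t ^ 2)
    (fun t _ => (hderiv t).continuousAt.continuousWithinAt)
    (fun t _ => (hderiv t).hasDerivWithinAt) (by simp) (by fun_prop)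
    (fun t _ => (((hasDerivAt_id t).const_mul _).const_add _ |>.add
      ((hasDerivAt_pow 2 t).const_mul _)).hasDerivWithinAt)
    (fun t ht => (hslope t ht.1).trans_eq (by ring))
    (Set.right_mem_Icc.2 zero_le_one)
  simpa [v] using hbound

theorem BlockSmooth.norm_sq_grad_le (hf : Differentiable ℝ f) (hs : BlockSmooth f s L)
    (hL : 0 ≤ L) (hnonneg : ∀ x, 0 ≤ f x) (x : Fin p → ℝ) :
    ‖blockRestrict s (grad f x)‖ ^ 2 ≤ 2 * L * f x := by
  set G := ‖blockRestrict s (grad f x)‖ ^ 2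
  -- a gradient step of length `t` inside the block cannot push `f` below zero
  have hquad : ∀ t : ℝ, 0 ≤ (L / 2 * G) * (t * t) + (-G) * t + f x := by
    intro t
    set y := s.piecewise (x - t • grad f x) x
    have hstep : blockRestrict s (y - x) = -t • blockRestrict s (grad f x) := by
      rw [map_sub, blockRestrict_congr fun j hj => s.piecewise_eq_of_mem _ _ hj, ← map_sub,
        sub_sub_cancel_left, ← map_smul, neg_smul]
    have hdesc := hs.descent hf hL (x := x) (y := y)
      fun j hj => (s.piecewise_eq_of_notMem _ _ hj).symm
    rw [hstep, inner_smul_right, real_inner_self_eq_norm_sq, norm_smul, mul_pow,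
      Real.norm_eq_abs, sq_abs] at hdesc
    linarith [hnonneg y]
  have hdiscrim := discrim_le_zero hquad
  rw [discrim] at hdiscrim
  by_contra! hlt
  have hG : 0 < G := lt_of_le_of_lt (by have := hnonneg x; positivity) hlt
  nlinarith [mul_lt_mul_of_pos_left hlt hG]

end BlockSmooth

section GradientDescent

variable {p : ℕ} {f : (Fin p → ℝ) → ℝ} {θ : ℕ → Fin p → ℝ} {η : ℝ}

theorem sub_gd_succ (hgd : ∀ t, θ (t + 1) = fun j => θ t j - η * grad f (θ t) j) (t : ℕ) :
    θ t - θ (t + 1) = η • grad f (θ t) := by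
  ext j
  simp [hgd t]

theorem apply_gd_succ_le (hf : Differentiable ℝ f) {L M : ℝ} (hL : 0 ≤ L)
    (hsmooth : BlockSmooth f univ L) (hPL : ∀ x, 2 * M * f x ≤ ∑ j, grad f x j ^ 2)
    (hη : 0 < η) (hηL : η * L ≤ 1)
    (hgd : ∀ t, θ (t + 1) = fun j => θ t j - η * grad f (θ t) j) (t : ℕ) :
    f (θ (t + 1)) ≤ (1 - η * M) * f (θ t) := by
  have hdesc := hsmooth.descent hf hL (x := θ t) (y := θ (t + 1))
    fun j hj => absurd (mem_univ j) hj
  rw [← neg_sub, sub_gd_succ hgd, map_neg, map_smul, inner_neg_right, inner_smul_right,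
    real_inner_self_eq_norm_sq, norm_neg, norm_smul, mul_pow, Real.norm_of_nonneg hη.le] at hdesc
  set G := ‖blockRestrict univ (grad f (θ t))‖ ^ 2
  have hPLt : 2 * M * f (θ t) ≤ G := (hPL (θ t)).trans_eq (norm_blockRestrict_sq _ _).symm
  have hG : 0 ≤ G := by positivity
  nlinarith [mul_le_mul_of_nonneg_left hPLt hη.le,
    mul_nonneg (mul_nonneg hη.le hG) (sub_nonneg.2 hηL)]

theorem apply_gd_le_pow (hf : Differentiable ℝ f) {L M : ℝ} (hL : 0 ≤ L)
    (hsmooth : BlockSmooth f univ L) (hPL : ∀ x, 2 * M * f x ≤ ∑ j, grad f x j ^ 2)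
    (hη : 0 < η) (hηL : η * L ≤ 1) (hηM : η * M ≤ 1)
    (hgd : ∀ t, θ (t + 1) = fun j => θ t j - η * grad f (θ t) j) (t : ℕ) :
    f (θ t) ≤ (1 - η * M) ^ t * f (θ 0) := by
  induction t with
  | zero => simp
  | succ t ih =>
    calc f (θ (t + 1)) ≤ (1 - η * M) * f (θ t) := apply_gd_succ_le hf hL hsmooth hPL hη hηL hgd t
      _ ≤ (1 - η * M) * ((1 - η * M) ^ t * f (θ 0)) := by gcongr
      _ = (1 - η * M) ^ (t + 1) * f (θ 0) := by ring

theorem norm_blockRestrict_gd_sub_le (s : Finset (Fin p)) (hη : 0 ≤ η)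
    (hgd : ∀ t, θ (t + 1) = fun j => θ t j - η * grad f (θ t) j) (τ : ℕ) :
    ‖blockRestrict s (θ 0 - θ τ)‖ ≤
      ∑ t ∈ range τ, η * ‖blockRestrict s (grad f (θ t))‖ := by
  have htelescope := dist_le_range_sum_dist (fun t => blockRestrict s (θ t)) τ
  simp only [dist_eq_norm, ← map_sub, sub_gd_succ hgd, map_smul, norm_smul,
    Real.norm_of_nonneg hη] at htelescope
  exact htelescope

end GradientDescent

section BlockImportance

variable {p : ℕ} {f : (Fin p → ℝ) → ℝ} {θ : ℕ → Fin p → ℝ} {η L M K : ℝ} {s : Finset (Fin p)}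

theorem norm_blockRestrict_grad_gd_le (hf : Differentiable ℝ f) (hnonneg : ∀ x, 0 ≤ f x)
    (hK : 0 ≤ K) (hs : BlockSmooth f s K) (hL : 0 ≤ L) (hsmooth : BlockSmooth f univ L)
    (hPL : ∀ x, 2 * M * f x ≤ ∑ j, grad f x j ^ 2) (hη : 0 < η) (hηL : η * L ≤ 1)
    (hηM : η * M ≤ 1) (hgd : ∀ t, θ (t + 1) = fun j => θ t j - η * grad f (θ t) j) (t : ℕ) :
    ‖blockRestrict s (grad f (θ t))‖ ≤ √(2 * K * f (θ 0)) * √(1 - η * M) ^ t := by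
  have hf0 := hnonneg (θ 0)
  rw [← sq_le_sq₀ (norm_nonneg _) (by positivity), mul_pow, ← pow_mul, mul_comm t, pow_mul,
    Real.sq_sqrt (by positivity), Real.sq_sqrt (by linarith)]
  calc ‖blockRestrict s (grad f (θ t))‖ ^ 2 ≤ 2 * K * f (θ t) :=
        hs.norm_sq_grad_le hf hK hnonneg _
    _ ≤ 2 * K * ((1 - η * M) ^ t * f (θ 0)) := by
        gcongr
        exact apply_gd_le_pow hf hL hsmooth hPL hη hηL hηM hgd t
    _ = 2 * K * f (θ 0) * (1 - η * M) ^ t := by ring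

theorem norm_blockRestrict_gd_displacement_le {B : ℝ} (hB : 0 ≤ B) (hM : 0 < M) (hη : 0 < η)
    (hηM : η * M ≤ 1) (hgd : ∀ t, θ (t + 1) = fun j => θ t j - η * grad f (θ t) j)
    (hgrad : ∀ t, ‖blockRestrict s (grad f (θ t))‖ ≤ B * √(1 - η * M) ^ t) (τ : ℕ) :
    ‖blockRestrict s (θ 0 - θ τ)‖ ≤ 2 * B / M := by
  set r := √(1 - η * M)
  have hr : r ≤ 1 - η * M / 2 := by
    simpa [r, sub_eq_add_neg, neg_div] using Real.sqrt_one_add_le (x := -(η * M)) (by linarith)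
  have hηM0 : 0 < η * M := mul_pos hη hM
  calc ‖blockRestrict s (θ 0 - θ τ)‖
      ≤ ∑ t ∈ range τ, η * ‖blockRestrict s (grad f (θ t))‖ :=
        norm_blockRestrict_gd_sub_le s hη.le hgd τ
    _ ≤ ∑ t ∈ range τ, η * (B * r ^ t) := by gcongr with t; exact hgrad t
    _ = η * B * ∑ t ∈ Ico 0 τ, r ^ t := by rw [mul_sum, range_eq_Ico]; ring_nf
    _ ≤ η * B * (r ^ 0 / (1 - r)) := by
        gcongr
        exact geom_sum_Ico_le_of_lt_one (Real.sqrt_nonneg _) (by linarith)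
    _ ≤ η * B * (1 / (η * M / 2)) := by
        rw [pow_zero]
        gcongr
        linarith
    _ = 2 * B / M := by field_simp

theorem natural_importance_le (hf : Differentiable ℝ f) (hnonneg : ∀ x, 0 ≤ f x)
    (hK : 0 ≤ K) (hs : BlockSmooth f s K) (hL : 0 ≤ L) (hsmooth : BlockSmooth f univ L)
    (hPL : ∀ x, 2 * M * f x ≤ ∑ j, grad f x j ^ 2) (hM : 0 < M) (hη : 0 < η)
    (hηL : η * L ≤ 1) (hηM : η * M ≤ 1)
    (hgd : ∀ t, θ (t + 1) = fun j => θ t j - η * grad f (θ t) j) (τ : ℕ) :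
    f (s.piecewise (θ 0) (θ τ)) - f (θ τ) ≤
      (4 * (K / M) ^ 2 + 4 * (K / M) * √(1 - η * M) ^ τ) * f (θ 0) := by
  set B := √(2 * K * f (θ 0))
  have hB2 : B ^ 2 = 2 * K * f (θ 0) := Real.sq_sqrt (by have := hnonneg (θ 0); positivity)
  have hgrad := norm_blockRestrict_grad_gd_le hf hnonneg hK hs hL hsmooth hPL hη hηL hηM hgd
  have hdist := norm_blockRestrict_gd_displacement_le (Real.sqrt_nonneg _) hM hη hηM hgd hgrad τ
  have hdesc := hs.descent hf hK (x := θ τ) (y := s.piecewise (θ 0) (θ τ))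
    fun j hj => (s.piecewise_eq_of_notMem _ _ hj).symm
  rw [map_sub, blockRestrict_congr (u := s.piecewise (θ 0) (θ τ)) (v := θ 0)
    fun j hj => s.piecewise_eq_of_mem _ _ hj, ← map_sub] at hdesc
  set d := ‖blockRestrict s (θ 0 - θ τ)‖
  calc f (s.piecewise (θ 0) (θ τ)) - f (θ τ)
      ≤ ‖blockRestrict s (grad f (θ τ))‖ * d + K / 2 * d ^ 2 := by
        linarith [real_inner_le_norm (blockRestrict s (grad f (θ τ))) (blockRestrict s (θ 0 - θ τ))]
    _ ≤ B * √(1 - η * M) ^ τ * (2 * B / M) + K / 2 * (2 * B / M) ^ 2 := by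
        gcongr
        exact hgrad τ
    _ = (4 * (K / M) ^ 2 + 4 * (K / M) * √(1 - η * M) ^ τ) * f (θ 0) := by
        field_simp
        rw [hB2]
        ring

end BlockImportance

theorem block_importance_upper_bound_general {p D : ℕ} (f : (Fin p → ℝ) → ℝ)
    (hdiff : Differentiable ℝ f)
    (hmin : ∀ θ, 0 ≤ f θ)
    (Δ : Fin D → Finset (Fin p))
    (μ Li : Fin D → ℝ)
    (horder : ∀ i, 0 ≤ μ i ∧ μ i ≤ Li i)
    (hμpos : 0 < ∑ i', μ i')
    (hPLip : ∀ i (θ θ' : Fin p → ℝ), (∀ j ∉ Δ i, θ j = θ' j) →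
      ∑ j ∈ Δ i, (grad f θ j - grad f θ' j) ^ 2 ≤ (Li i) ^ 2 * ∑ j ∈ Δ i, (θ j - θ' j) ^ 2)
    (hLip : ∀ θ θ' : Fin p → ℝ,
      ∑ j, (grad f θ j - grad f θ' j) ^ 2 ≤ (∑ i', Li i') ^ 2 * ∑ j, (θ j - θ' j) ^ 2)
    (hPL : ∀ θ, 2 * (∑ i', μ i') * f θ ≤ ∑ j, (grad f θ j) ^ 2)
    (η : ℝ) (hηpos : 0 < η) (hη : η ≤ 1 / ∑ i', Li i')
    (θ : ℕ → Fin p → ℝ)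
    (hgd : ∀ τ, θ (τ + 1) = fun j => θ τ j - η * grad f (θ τ) j)
    (τ : ℕ) (i : Fin D) :
    (f (fun j => if j ∈ Δ i then θ 0 j else θ τ j) - f (θ τ)) / f (θ 0) ≤
      8 * (Li i / ∑ i', μ i') ^ 2 +
        4 * (Li i / ∑ i', μ i') * (1 - η * ∑ i', μ i') ^ ((τ : ℝ) / 2) := by
  have hK : 0 ≤ Li i := (horder i).1.trans (horder i).2
  have hμLi : ∑ i', μ i' ≤ ∑ i', Li i' := sum_le_sum fun i' _ => (horder i').2
  have hLpos : 0 < ∑ i', Li i' := hμpos.trans_le hμLi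
  have hηL : η * ∑ i', Li i' ≤ 1 := (le_div_iff₀ hLpos).1 hη
  have hηM : η * ∑ i', μ i' ≤ 1 := (mul_le_mul_of_nonneg_left hμLi hηpos.le).trans hηL
  have himportance := natural_importance_le hdiff hmin hK (hPLip i) hLpos.le
    (fun x y _ => hLip x y) hPL hμpos hηpos hηL hηM hgd τ
  rw [Real.rpow_div_two_eq_sqrt _ (by linarith), Real.rpow_natCast]
  set κ := Li i / ∑ i', μ i'
  have hκ : 0 ≤ κ := div_nonneg hK hμpos.le
  have hf0 := hmin (θ 0)
  refine div_le_of_le_mul₀ hf0 (by positivity) (himportance.trans ?_)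
  gcongr
  linarith [sq_nonneg κ]

/-- Under partial PL and smoothness, the natural importance of block `Δ i` relative to
initialization satisfies `I^N_{Δ i}(θ_τ, θ_0)/f(θ_0) ≤ 8κ² + 4κ(1-ημ)^{τ/2}`, `κ = Lᵢ/μ`. -/
theorem block_importance_upper_bound {p D : ℕ} (f : (Fin p → ℝ) → ℝ)
    (hdiff : Differentiable ℝ f)
    (hmin : ∀ θ, 0 ≤ f θ) (hattain : ∃ θ, f θ = 0)
    (Δ : Fin D → Finset (Fin p))
    (hdisj : ∀ i j, i ≠ j → Disjoint (Δ i) (Δ j))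
    (hcover : ∀ k : Fin p, ∃ i, k ∈ Δ i)
    (μ Li : Fin D → ℝ)
    (horder : ∀ i, 0 ≤ μ i ∧ μ i ≤ Li i)
    (hμpos : 0 < ∑ i', μ i')
    (hPPL : ∀ i θ, 2 * μ i * f θ ≤ ∑ j ∈ Δ i, (grad f θ j) ^ 2)
    (hPLip : ∀ i (θ θ' : Fin p → ℝ), (∀ j ∉ Δ i, θ j = θ' j) →
      ∑ j ∈ Δ i, (grad f θ j - grad f θ' j) ^ 2 ≤ (Li i) ^ 2 * ∑ j ∈ Δ i, (θ j - θ' j) ^ 2)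
    (hLip : ∀ θ θ' : Fin p → ℝ,
      ∑ j, (grad f θ j - grad f θ' j) ^ 2 ≤ (∑ i', Li i') ^ 2 * ∑ j, (θ j - θ' j) ^ 2)
    (hPL : ∀ θ, 2 * (∑ i', μ i') * f θ ≤ ∑ j, (grad f θ j) ^ 2)
    (η : ℝ) (hηpos : 0 < η) (hη : η ≤ 1 / ∑ i', Li i')
    (θ : ℕ → Fin p → ℝ)
    (hgd : ∀ τ, θ (τ + 1) = fun j => θ τ j - η * grad f (θ τ) j)
    (τ : ℕ) (i : Fin D) :
    (f (fun j => if j ∈ Δ i then θ 0 j else θ τ j) - f (θ τ)) / f (θ 0) ≤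
      8 * (Li i / ∑ i', μ i') ^ 2 +
        4 * (Li i / ∑ i', μ i') * (1 - η * ∑ i', μ i') ^ ((τ : ℝ) / 2) :=
  block_importance_upper_bound_general f hdiff hmin Δ μ Li horder hμpos hPLip hLip hPL η hηpos hη θ
    hgd τ i
end

section
/- In the setting of the previous statement, the pruned vector θ^p which agrees with the minimum-norm solution θ* outside block Δ_i and with θ_0 on Δ_i satisfies L(θ^p) ≥ (μ_i/L)² · L(θ_0), where μ_i = σ_min(X_i)² and L = ‖X‖². -/
/-!
Write `r = y - Xθ₀ = XXᵀz` with `z = (XXᵀ)⁻¹r`, and let `w` be `Xᵀz` restricted to `Δᵢ`, so that the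
pruned residual is `y - Xθᵖ = Xw`. Cauchy–Schwarz applied to `⟪Xᵀz, v⟫ = ⟪z, Xv⟫` gives two estimates:
with `v = Xᵀz` and `‖Xv‖² ≤ L‖v‖²` it gives `‖r‖ ≤ L‖z‖`, and with `v = w` and `μᵢ‖z‖² ≤ ‖w‖²` it gives
`μᵢ‖z‖ ≤ ‖Xw‖`. Hence `‖Xw‖ ≥ (μᵢ/L)‖r‖`.
-/

open Matrix Finset

section SumSq

variable {m n : Type*} [Fintype m] [Fintype n]

theorem sq_transpose_mulVec_dotProduct_le (A : Matrix m n ℝ) (z : m → ℝ) (v : n → ℝ) :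
    (Aᵀ *ᵥ z ⬝ᵥ v) ^ 2 ≤ (∑ k, z k ^ 2) * ∑ k, (A *ᵥ v) k ^ 2 := by
  rw [mulVec_transpose, ← dotProduct_mulVec]
  exact sum_mul_sq_le_sq_mul_sq _ _ _

theorem sum_sq_mulVec_transpose_mulVec_le (X : Matrix m n ℝ) {L : ℝ}
    (hL : ∀ v : n → ℝ, ∑ k, (X *ᵥ v) k ^ 2 ≤ L * ∑ j, v j ^ 2) (z : m → ℝ) :
    ∑ k, (X *ᵥ (Xᵀ *ᵥ z)) k ^ 2 ≤ L ^ 2 * ∑ k, z k ^ 2 := by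
  set u := Xᵀ *ᵥ z
  set R := ∑ k, (X *ᵥ u) k ^ 2
  have hU : (∑ j, u j ^ 2) ^ 2 ≤ (∑ k, z k ^ 2) * R := by
    have h : (u ⬝ᵥ u) ^ 2 ≤ _ := sq_transpose_mulVec_dotProduct_le X z u
    rwa [show u ⬝ᵥ u = ∑ j, u j ^ 2 by simp only [dotProduct, sq]] at h
  have hR : 0 ≤ R := sum_nonneg fun _ _ ↦ sq_nonneg _
  have hRLU : R ^ 2 ≤ L ^ 2 * (∑ k, z k ^ 2) * R := by
    calc R ^ 2 ≤ (L * ∑ j, u j ^ 2) ^ 2 := pow_le_pow_left₀ hR (hL u) 2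
      _ = L ^ 2 * (∑ j, u j ^ 2) ^ 2 := by ring
      _ ≤ L ^ 2 * ((∑ k, z k ^ 2) * R) := by gcongr
      _ = L ^ 2 * (∑ k, z k ^ 2) * R := by ring
  have hZ : 0 ≤ L ^ 2 * ∑ k, z k ^ 2 := by positivity
  nlinarith

theorem sq_mul_sum_sq_le_sum_sq_mulVec_indicator (X : Matrix m n ℝ) (s : Finset n) {μ : ℝ}
    (hμ0 : 0 ≤ μ) (z : m → ℝ) (hμ : μ * ∑ k, z k ^ 2 ≤ ∑ j ∈ s, (Xᵀ *ᵥ z) j ^ 2) :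
    μ ^ 2 * ∑ k, z k ^ 2 ≤ ∑ k, (X *ᵥ (s : Set n).indicator (Xᵀ *ᵥ z)) k ^ 2 := by
  classical
  set u := Xᵀ *ᵥ z
  set Z := ∑ k, z k ^ 2
  set S := ∑ k, (X *ᵥ (s : Set n).indicator u) k ^ 2
  have hT : u ⬝ᵥ (s : Set n).indicator u = ∑ j ∈ s, u j ^ 2 := by
    simp only [dotProduct, Set.indicator_apply, mem_coe, mul_ite, mul_zero, sum_ite_mem,
      univ_inter, sq]
  have hTS : (∑ j ∈ s, u j ^ 2) ^ 2 ≤ Z * S := by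
    rw [← hT]; exact sq_transpose_mulVec_dotProduct_le X z _
  have hZ : 0 ≤ Z := sum_nonneg fun _ _ ↦ sq_nonneg _
  have hS : 0 ≤ S := sum_nonneg fun _ _ ↦ sq_nonneg _
  have hμZ : (μ * Z) ^ 2 ≤ Z * S :=
    (pow_le_pow_left₀ (mul_nonneg hμ0 hZ) hμ 2).trans hTS
  nlinarith

end SumSq

theorem pruned_block_loss_lower_bound_general {n p D : ℕ}
    (X : Matrix (Fin n) (Fin p) ℝ) (y : Fin n → ℝ) (θ0 : Fin p → ℝ)
    (Δ : Fin D → Finset (Fin p))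
    (μ : Fin D → ℝ) (L : ℝ) (hμpos : ∀ i, 0 < μ i) (hLpos : 0 < L)
    (hμ : ∀ i (v : Fin n → ℝ),
      μ i * ∑ k, (v k) ^ 2 ≤ ∑ j ∈ Δ i, (∑ k, X k j * v k) ^ 2)
    (hL : ∀ w : Fin p → ℝ, ∑ k, (X.mulVec w k) ^ 2 ≤ L * ∑ j, (w j) ^ 2)
    (hinv : IsUnit (X * X.transpose).det)
    (i : Fin D) :
    let Lloss : (Fin p → ℝ) → ℝ := fun θ => (1 / 2) * ∑ k, (y k - X.mulVec θ k) ^ 2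
    let θstar : Fin p → ℝ :=
      θ0 + X.transpose.mulVec ((X * X.transpose)⁻¹.mulVec (y - X.mulVec θ0))
    let θp : Fin p → ℝ := fun j => if j ∈ Δ i then θ0 j else θstar j
    (μ i / L) ^ 2 * Lloss θ0 ≤ Lloss θp := by
  intro Lloss θstar θp
  set z := (X * Xᵀ)⁻¹ *ᵥ (y - X *ᵥ θ0)
  set w := (Δ i : Set (Fin p)).indicator (Xᵀ *ᵥ z)
  have hr : X *ᵥ (Xᵀ *ᵥ z) = y - X *ᵥ θ0 := by
    rw [mulVec_mulVec, mulVec_mulVec, mul_nonsing_inv _ hinv, one_mulVec]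
  have hθstar : θstar = θ0 + Xᵀ *ᵥ z := rfl
  have hθp : θp = θstar - w := by
    ext j
    by_cases hj : j ∈ Δ i <;> simp [θp, hθstar, w, hj]
  have hpruned : y - X *ᵥ θp = X *ᵥ w := by
    rw [hθp, mulVec_sub, hθstar, mulVec_add, hr]
    abel
  have hupper := sum_sq_mulVec_transpose_mulVec_le X hL z
  have hlower := sq_mul_sum_sq_le_sum_sq_mulVec_indicator X (Δ i) (hμpos i).le z (hμ i z)
  rw [hr] at hupper
  calc (μ i / L) ^ 2 * Lloss θ0 = (μ i / L) ^ 2 * ((1 / 2) * ∑ k, (y - X *ᵥ θ0) k ^ 2) := rfl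
    _ ≤ (μ i / L) ^ 2 * ((1 / 2) * (L ^ 2 * ∑ k, z k ^ 2)) := by
        gcongr
    _ = (1 / 2) * (μ i ^ 2 * ∑ k, z k ^ 2) := by field_simp
    _ ≤ (1 / 2) * ∑ k, (X *ᵥ w) k ^ 2 := by gcongr
    _ = Lloss θp := by simp only [Lloss, ← hpruned, Pi.sub_apply]

/-- Pruning block `Δ i` of the minimum-norm interpolating solution (resetting it to `θ₀`)
incurs loss at least `(μᵢ/L)² L(θ₀)`, where `μᵢ = σ_min(Xᵢ)²` and `L = ‖X‖²`. -/
theorem pruned_block_loss_lower_bound {n p D : ℕ}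
    (X : Matrix (Fin n) (Fin p) ℝ) (y : Fin n → ℝ) (θ0 : Fin p → ℝ)
    (Δ : Fin D → Finset (Fin p))
    (hdisj : ∀ i j, i ≠ j → Disjoint (Δ i) (Δ j))
    (hcover : ∀ k : Fin p, ∃ i, k ∈ Δ i)
    (μ : Fin D → ℝ) (L : ℝ) (hμpos : ∀ i, 0 < μ i) (hLpos : 0 < L)
    (hμ : ∀ i (v : Fin n → ℝ),
      μ i * ∑ k, (v k) ^ 2 ≤ ∑ j ∈ Δ i, (∑ k, X k j * v k) ^ 2)
    (hL : ∀ w : Fin p → ℝ, ∑ k, (X.mulVec w k) ^ 2 ≤ L * ∑ j, (w j) ^ 2)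
    (hinv : IsUnit (X * X.transpose).det)
    (i : Fin D) :
    let Lloss : (Fin p → ℝ) → ℝ := fun θ => (1 / 2) * ∑ k, (y k - X.mulVec θ k) ^ 2
    let θstar : Fin p → ℝ :=
      θ0 + X.transpose.mulVec ((X * X.transpose)⁻¹.mulVec (y - X.mulVec θ0))
    let θp : Fin p → ℝ := fun j => if j ∈ Δ i then θ0 j else θstar j
    (μ i / L) ^ 2 * Lloss θ0 ≤ Lloss θp :=
  pruned_block_loss_lower_bound_general X y θ0 Δ μ L hμpos hLpos hμ hL hinv i
end
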